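/- arXiv:1804.05206 — 9 statements merged into one kernel-verified Lean document; each statement's English description precedes it below -/
import Mathlib

section
/- If A ∈ ℂ^{n×n} has index 1 (i.e., rank(A²) = rank(A)), then the Moore-Penrose inverse of A²A† equals A times the Moore-Penrose inverse of A², that is, (A²A†)† = A(A²)†. -/
open Matrix

/-- `X` is the Moore-Penrose inverse of `A`. -/
def IsMoorePenrose {m n : ℕ} (A : Matrix (Fin m) (Fin n) ℂ)
    (X : Matrix (Fin n) (Fin m) ℂ) : Prop :=
  A * X * A = A ∧ X * A * X = X ∧ (A * X)ᴴ = A * X ∧ (X * A)ᴴ = X * A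

/-- Uniqueness of the Moore-Penrose inverse. -/
lemma mp_unique {m n : ℕ} {A : Matrix (Fin m) (Fin n) ℂ}
    {X X' : Matrix (Fin n) (Fin m) ℂ}
    (hX : IsMoorePenrose A X) (hX' : IsMoorePenrose A X') : X = X' := by
  obtain ⟨h1, h2, h3, h4⟩ := hX
  obtain ⟨h1', h2', h3', h4'⟩ := hX'
  have hAX : A * X = A * X' := by
    calc A * X = (A * X' * A) * X := by rw [h1']
    _ = (A * X') * (A * X) := by simp only [Matrix.mul_assoc]
    _ = (A * X')ᴴ * (A * X)ᴴ := by rw [h3, h3']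
    _ = ((A * X) * (A * X'))ᴴ := (conjTranspose_mul _ _).symm
    _ = (A * X')ᴴ := by rw [← Matrix.mul_assoc, h1]
    _ = A * X' := h3'
  have hXA : X * A = X' * A := by
    calc X * A = X * (A * X' * A) := by rw [h1']
    _ = (X * A) * (X' * A) := by simp only [Matrix.mul_assoc]
    _ = (X * A)ᴴ * (X' * A)ᴴ := by rw [h4, h4']
    _ = ((X' * A) * (X * A))ᴴ := (conjTranspose_mul _ _).symm
    _ = (X' * A)ᴴ := by rw [Matrix.mul_assoc, ← Matrix.mul_assoc A X A, h1]
    _ = X' * A := h4'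
  calc X = X * A * X := h2.symm
  _ = X' * A * X := by rw [hXA]
  _ = X' * (A * X') := by rw [Matrix.mul_assoc, hAX]
  _ = X' * A * X' := by rw [Matrix.mul_assoc]
  _ = X' := h2'

open scoped ComplexOrder in
/-- If `rank (A*A) = rank A`, then `A` factors through `A*A` on the left. -/
lemma exists_left_factor {n : ℕ} (A : Matrix (Fin n) (Fin n) ℂ)
    (hrank : (A * A).rank = A.rank) : ∃ T, A = T * (A * A) := by
  set B := Aᴴ with hB
  have hBB : B * B = (A * A)ᴴ := by rw [conjTranspose_mul]
  have hr : (B * B).rank = B.rank := by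
    rw [hBB, rank_conjTranspose, hB, rank_conjTranspose, hrank]
  have hle : LinearMap.range (B * B).mulVecLin ≤ LinearMap.range B.mulVecLin := by
    rw [mulVecLin_mul]
    exact LinearMap.range_comp_le_range _ _
  have heq : LinearMap.range (B * B).mulVecLin = LinearMap.range B.mulVecLin :=
    Submodule.eq_of_le_of_finrank_le hle (by rw [← Matrix.rank, ← Matrix.rank, hr])
  have hcol : ∀ j, ∃ v : Fin n → ℂ, (B * B) *ᵥ v = fun i => B i j := by
    intro j
    have hmem : (fun i => B i j) ∈ LinearMap.range (B * B).mulVecLin := by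
      rw [heq]
      exact ⟨Pi.single j 1, by simp [mulVecLin_apply]; rfl⟩
    obtain ⟨v, hv⟩ := hmem
    exact ⟨v, hv⟩
  choose v hv using hcol
  set S : Matrix (Fin n) (Fin n) ℂ := Matrix.of fun i j => v j i with hS
  have hBS : (B * B) * S = B := by
    ext i j
    have := congrFun (hv j) i
    simpa [hS, Matrix.mul_apply, Matrix.mulVec, dotProduct] using this
  refine ⟨Sᴴ, ?_⟩
  calc A = Bᴴ := by rw [hB, conjTranspose_conjTranspose]
  _ = ((B * B) * S)ᴴ := by rw [hBS]
  _ = Sᴴ * (B * B)ᴴ := conjTranspose_mul _ _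
  _ = Sᴴ * (A * A) := by rw [hBB, conjTranspose_conjTranspose]

theorem stmt_4 {n : ℕ} (A Y Z W : Matrix (Fin n) (Fin n) ℂ)
    (hrank : (A * A).rank = A.rank)
    (hY : IsMoorePenrose A Y)
    (hZ : IsMoorePenrose (A * A) Z)
    (hW : IsMoorePenrose (A * A * Y) W) :
    W = A * Z := by
  obtain ⟨T, hT⟩ := exists_left_factor A hrank
  obtain ⟨hY1, hY2, hY3, hY4⟩ := hY
  obtain ⟨hZ1, hZ2, hZ3, hZ4⟩ := hZ
  have key : A * A * Y * A = A * A := by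
    calc A * A * Y * A = A * (A * Y * A) := by noncomm_ring
    _ = A * A := by rw [hY1]
  refine mp_unique hW ⟨?_, ?_, ?_, ?_⟩
  · calc A * A * Y * (A * Z) * (A * A * Y)
        = (A * A * Y * A) * Z * (A * A) * Y := by noncomm_ring
    _ = (A * A) * Z * (A * A) * Y := by rw [key]
    _ = A * A * Y := by rw [hZ1]
  · calc A * Z * (A * A * Y) * (A * Z)
        = A * (Z * (A * A * Y * A) * Z) := by noncomm_ring
    _ = A * (Z * (A * A) * Z) := by rw [key]
    _ = A * Z := by rw [hZ2]
  · have h : A * A * Y * (A * Z) = A * A * Z := by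
      calc A * A * Y * (A * Z) = (A * A * Y * A) * Z := by noncomm_ring
      _ = A * A * Z := by rw [key]
    rw [h]
    exact hZ3
  · have h : A * Z * (A * A * Y) = A * Y := by
      calc A * Z * (A * A * Y)
          = (T * (A * A)) * Z * (A * A) * Y := by rw [← hT]; noncomm_ring
      _ = T * ((A * A) * Z * (A * A)) * Y := by noncomm_ring
      _ = T * (A * A) * Y := by rw [hZ1]
      _ = A * Y := by rw [← hT]
    rw [h]
    exact hY3
end

section
/- Let A ∈ ℂ^{n×n} with index k (the smallest nonnegative integer with rank(A^k) = rank(A^{k+1})). Then X = A^k (A^{k+1})† satisfies XAX = X, where (·)† denotes the Moore-Penrose inverse. -/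
open Matrix

theorem pow_mul_mul_mul_pow_mul_eq {M : Type*} [Monoid M] {a p : M} (k : ℕ)
    (h : p * a ^ (k + 1) * p = p) :
    a ^ k * p * a * (a ^ k * p) = a ^ k * p :=
  calc a ^ k * p * a * (a ^ k * p) = a ^ k * (p * a ^ (k + 1) * p) := by
        simp only [pow_succ', mul_assoc]
    _ = a ^ k * p := by rw [h]

theorem stmt_5_general {n : ℕ} (A : Matrix (Fin n) (Fin n) ℂ) (k : ℕ)
    (P : Matrix (Fin n) (Fin n) ℂ) (hP : IsMoorePenrose (A ^ (k + 1)) P) :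
    (A ^ k * P) * A * (A ^ k * P) = A ^ k * P :=
  pow_mul_mul_mul_pow_mul_eq k hP.2.1

theorem stmt_5 {n : ℕ} (A : Matrix (Fin n) (Fin n) ℂ) (k : ℕ)
    (hk : (A ^ k).rank = (A ^ (k + 1)).rank)
    (hmin : ∀ j : ℕ, (A ^ j).rank = (A ^ (j + 1)).rank → k ≤ j)
    (P : Matrix (Fin n) (Fin n) ℂ) (hP : IsMoorePenrose (A ^ (k + 1)) P) :
    (A ^ k * P) * A * (A ^ k * P) = A ^ k * P :=
  stmt_5_general A k P hP
end

section
/- Let A ∈ ℂ^{n×n} with index k. Then the matrix X = A^k (A^{k+1})† satisfies X A^{k+1} = A^k. -/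
open Matrix

/-!
Since `A ^ (k + 1) = A * A ^ k` has the same rank as `A ^ k`, the row space of `A ^ (k + 1)`,
which is contained in that of `A ^ k`, is all of it; hence `A ^ k = D * A ^ (k + 1)` for some `D`.
Then `A ^ k * P * A ^ (k + 1) = D * (A ^ (k + 1) * P * A ^ (k + 1)) = D * A ^ (k + 1) = A ^ k`
by the first Penrose equation.
-/

namespace Matrix

variable {m n p : Type*} [Fintype n] [Fintype p]

theorem exists_eq_mul_of_range_mulVecLin_le {R : Type*} [CommSemiring R] [DecidableEq p]
    (M : Matrix m n R) (N : Matrix m p R)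
    (h : LinearMap.range N.mulVecLin ≤ LinearMap.range M.mulVecLin) :
    ∃ D : Matrix n p R, N = M * D := by
  have hcol (j : p) : N.col j ∈ LinearMap.range M.mulVecLin :=
    h ⟨Pi.single j 1, mulVec_single_one N j⟩
  choose v hv using hcol
  refine ⟨(of v)ᵀ, ext_col fun j => ?_⟩
  rw [← hv j]
  ext i
  simp [mulVec, dotProduct, mul_apply]

variable {K : Type*} [Field K]

theorem range_mulVecLin_mul_eq_of_rank_eq (M : Matrix m n K) (N : Matrix n p K)
    (h : (M * N).rank = M.rank) :
    LinearMap.range (M * N).mulVecLin = LinearMap.range M.mulVecLin := by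
  refine Submodule.eq_of_le_of_finrank_eq ?_ h
  rw [mulVecLin_mul]
  exact LinearMap.range_comp_le_range _ _

theorem exists_eq_mul_mul_of_rank_mul_eq_right [Fintype m] (M : Matrix m n K) (N : Matrix n p K)
    (h : (M * N).rank = N.rank) :
    ∃ D : Matrix n m K, N = D * (M * N) := by
  classical
  have hT : (Nᵀ * Mᵀ).rank = Nᵀ.rank := by
    rw [← transpose_mul, rank_transpose, rank_transpose, h]
  obtain ⟨D, hD⟩ := exists_eq_mul_of_range_mulVecLin_le (Nᵀ * Mᵀ) Nᵀ
    (range_mulVecLin_mul_eq_of_rank_eq Nᵀ Mᵀ hT).ge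
  refine ⟨Dᵀ, ?_⟩
  simpa only [transpose_mul, transpose_transpose] using congrArg transpose hD

end Matrix

theorem stmt_6_general {n : ℕ} (A : Matrix (Fin n) (Fin n) ℂ) (k : ℕ)
    (hk : (A ^ k).rank = (A ^ (k + 1)).rank)
    (P : Matrix (Fin n) (Fin n) ℂ) (hP : IsMoorePenrose (A ^ (k + 1)) P) :
    (A ^ k * P) * A ^ (k + 1) = A ^ k := by
  obtain ⟨D, hD⟩ : ∃ D, A ^ k = D * A ^ (k + 1) := by
    rw [pow_succ'] at hk ⊢
    exact exists_eq_mul_mul_of_rank_mul_eq_right A (A ^ k) hk.symm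
  calc (A ^ k * P) * A ^ (k + 1)
      = D * (A ^ (k + 1) * P * A ^ (k + 1)) := by rw [hD]; simp only [Matrix.mul_assoc]
    _ = A ^ k := by rw [hP.1, hD]

theorem stmt_6 {n : ℕ} (A : Matrix (Fin n) (Fin n) ℂ) (k : ℕ)
    (hk : (A ^ k).rank = (A ^ (k + 1)).rank)
    (hmin : ∀ j : ℕ, (A ^ j).rank = (A ^ (j + 1)).rank → k ≤ j)
    (P : Matrix (Fin n) (Fin n) ℂ) (hP : IsMoorePenrose (A ^ (k + 1)) P) :
    (A ^ k * P) * A ^ (k + 1) = A ^ k :=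
  stmt_6_general A k hk P hP
end

section
/- The core-EP inverse of a complex square matrix is unique: if X and Y both satisfy XAX = X, range(X) = range(X*) = range(A^D) and YAY = Y, range(Y) = range(Y*) = range(A^D), then X = Y. -/
open Matrix

/-- `X` is the Drazin inverse of `A` with respect to the index `k`. -/
def IsDrazin {n : ℕ} (A X : Matrix (Fin n) (Fin n) ℂ) (k : ℕ) : Prop :=
  A ^ (k + 1) * X = A ^ k ∧ X * A * X = X ∧ A * X = X * A

/-- If the range of `M.mulVecLin` is contained in that of `N.mulVecLin`, then `M` factors
through `N`. -/
lemma exists_factor {n : ℕ} (M N : Matrix (Fin n) (Fin n) ℂ)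
    (h : LinearMap.range M.mulVecLin ≤ LinearMap.range N.mulVecLin) :
    ∃ U : Matrix (Fin n) (Fin n) ℂ, M = N * U := by
  have hc : ∀ j : Fin n, ∃ u : Fin n → ℂ, N *ᵥ u = M *ᵥ Pi.single j 1 := by
    intro j
    have : M *ᵥ Pi.single j 1 ∈ LinearMap.range N.mulVecLin :=
      h ⟨Pi.single j 1, rfl⟩
    obtain ⟨u, hu⟩ := this
    exact ⟨u, hu⟩
  choose u hu using hc
  refine ⟨Matrix.of fun i j => u j i, ?_⟩
  ext i j
  have := congrFun (hu j) i
  simp only [Matrix.mulVec_single_one, mul_one] at this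
  calc M i j = (N *ᵥ u j) i := this.symm
    _ = (N * Matrix.of fun i j => u j i) i j := by
        simp [Matrix.mulVec, Matrix.mul_apply, dotProduct]

theorem stmt_8 {n : ℕ} (A D X Y : Matrix (Fin n) (Fin n) ℂ) (k : ℕ)
    (hD : IsDrazin A D k)
    (hX1 : X * A * X = X)
    (hX2 : LinearMap.range X.mulVecLin = LinearMap.range Xᴴ.mulVecLin)
    (hX3 : LinearMap.range X.mulVecLin = LinearMap.range D.mulVecLin)
    (hY1 : Y * A * Y = Y)
    (hY2 : LinearMap.range Y.mulVecLin = LinearMap.range Yᴴ.mulVecLin)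
    (hY3 : LinearMap.range Y.mulVecLin = LinearMap.range D.mulVecLin) :
    X = Y := by
  obtain ⟨hDk, hDAD, hDA⟩ := hD
  -- basic factorizations
  obtain ⟨E, hE⟩ := exists_factor X D (le_of_eq hX3)
  obtain ⟨F, hF⟩ := exists_factor D X (le_of_eq hX3.symm)
  obtain ⟨E', hE'⟩ := exists_factor Y D (le_of_eq hY3)
  obtain ⟨F', hF'⟩ := exists_factor D Y (le_of_eq hY3.symm)
  -- A * D * D = D
  have hADD : A * D * D = D := by rw [hDA]; exact hDAD
  -- D * A * X = X
  have hDAX : D * A * X = X := by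
    conv_lhs => rw [hE, ← mul_assoc]
    rw [hDAD, ← hE]
  have hDAY : D * A * Y = Y := by
    conv_lhs => rw [hE', ← mul_assoc]
    rw [hDAD, ← hE']
  -- P := A * X is idempotent and fixes columns of D
  have hPP : (A * X) * (A * X) = A * X := by
    calc (A * X) * (A * X) = A * (X * A * X) := by noncomm_ring
      _ = A * X := by rw [hX1]
  have hQQ : (A * Y) * (A * Y) = A * Y := by
    calc (A * Y) * (A * Y) = A * (Y * A * Y) := by noncomm_ring
      _ = A * Y := by rw [hY1]
  have hDmem : D = (A * X) * (F * D) := by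
    calc D = A * D * D := hADD.symm
      _ = A * (X * F) * D := by rw [← hF]
      _ = (A * X) * (F * D) := by noncomm_ring
  have hPD : (A * X) * D = D := by
    conv_lhs => rw [hDmem, ← mul_assoc]
    rw [hPP, ← hDmem]
  have hDmem' : D = (A * Y) * (F' * D) := by
    calc D = A * D * D := hADD.symm
      _ = A * (Y * F') * D := by rw [← hF']
      _ = (A * Y) * (F' * D) := by noncomm_ring
  have hQD : (A * Y) * D = D := by
    conv_lhs => rw [hDmem', ← mul_assoc]
    rw [hQQ, ← hDmem']
  -- the key subspace
  set K : Submodule ℂ (EuclideanSpace ℂ (Fin n)) :=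
    LinearMap.range (Matrix.toEuclideanLin D) with hK
  -- vanishing on the orthogonal complement
  have hker : ∀ (M : Matrix (Fin n) (Fin n) ℂ),
      LinearMap.range M.mulVecLin = LinearMap.range Mᴴ.mulVecLin →
      LinearMap.range M.mulVecLin = LinearMap.range D.mulVecLin →
      ∀ v : EuclideanSpace ℂ (Fin n), v ∈ Kᗮ →
      Matrix.toEuclideanLin M v = 0 := by
    intro M h2 h3 v hv
    have hMH : ∀ u : EuclideanSpace ℂ (Fin n), Matrix.toEuclideanLin Mᴴ u ∈ K := by
      intro u
      have : Mᴴ *ᵥ (WithLp.equiv 2 (Fin n → ℂ) u) ∈ LinearMap.range D.mulVecLin := by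
        rw [← h3, h2]
        exact ⟨(WithLp.equiv 2 (Fin n → ℂ) u), rfl⟩
      obtain ⟨w, hw⟩ := this
      exact ⟨(WithLp.equiv 2 (Fin n → ℂ)).symm w, by
        rw [Matrix.toEuclideanLin_apply, Matrix.toEuclideanLin_apply]
        exact congrArg _ hw⟩
    have hinner : ∀ u : EuclideanSpace ℂ (Fin n),
        inner ℂ (Matrix.toEuclideanLin Mᴴ u) v = (0 : ℂ) :=
      fun u => (Submodule.mem_orthogonal K v).mp hv _ (hMH u)
    have hadj : ∀ u : EuclideanSpace ℂ (Fin n),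
        inner ℂ u (Matrix.toEuclideanLin M v) = (0 : ℂ) := by
      intro u
      rw [Matrix.toEuclideanLin_conjTranspose_eq_adjoint] at hinner
      rw [← LinearMap.adjoint_inner_left]
      exact hinner u
    have := hadj (Matrix.toEuclideanLin M v)
    rwa [inner_self_eq_zero] at this
  have hXker := hker X hX2 hX3
  have hYker := hker Y hY2 hY3
  -- A * X = A * Y
  have hPQ : A * X = A * Y := by
    have hvec : ∀ w : Fin n → ℂ, (A * X) *ᵥ w = (A * Y) *ᵥ w := by
      intro w
      set v : EuclideanSpace ℂ (Fin n) := (WithLp.equiv 2 (Fin n → ℂ)).symm w with hv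
      obtain ⟨a, ha, b, hb, hab⟩ := K.exists_add_mem_mem_orthogonal v
      obtain ⟨z, hz⟩ := ha
      -- a = D *ᵥ z', images
      have haw : (WithLp.equiv 2 (Fin n → ℂ)) a
          = D *ᵥ (WithLp.equiv 2 (Fin n → ℂ) z) := by
        rw [← hz]; rfl
      have hwsum : w = (WithLp.equiv 2 (Fin n → ℂ)) a + (WithLp.equiv 2 (Fin n → ℂ)) b := by
        have := congrArg (WithLp.equiv 2 (Fin n → ℂ)) hab
        simpa [hv] using this
      have hXb : X *ᵥ (WithLp.equiv 2 (Fin n → ℂ)) b = 0 := by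
        have := hXker b hb
        have := congrArg (WithLp.equiv 2 (Fin n → ℂ)) this
        change X *ᵥ (WithLp.equiv 2 (Fin n → ℂ)) b = _ at this
        simpa using this
      have hYb : Y *ᵥ (WithLp.equiv 2 (Fin n → ℂ)) b = 0 := by
        have := hYker b hb
        have := congrArg (WithLp.equiv 2 (Fin n → ℂ)) this
        change Y *ᵥ (WithLp.equiv 2 (Fin n → ℂ)) b = _ at this
        simpa using this
      have hPa : (A * X) *ᵥ (WithLp.equiv 2 (Fin n → ℂ)) a
          = (WithLp.equiv 2 (Fin n → ℂ)) a := by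
        rw [haw, Matrix.mulVec_mulVec, hPD]
      have hQa : (A * Y) *ᵥ (WithLp.equiv 2 (Fin n → ℂ)) a
          = (WithLp.equiv 2 (Fin n → ℂ)) a := by
        rw [haw, Matrix.mulVec_mulVec, hQD]
      have hPb : (A * X) *ᵥ (WithLp.equiv 2 (Fin n → ℂ)) b = 0 := by
        rw [← Matrix.mulVec_mulVec, hXb, Matrix.mulVec_zero]
      have hQb : (A * Y) *ᵥ (WithLp.equiv 2 (Fin n → ℂ)) b = 0 := by
        rw [← Matrix.mulVec_mulVec, hYb, Matrix.mulVec_zero]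
      rw [hwsum, Matrix.mulVec_add, Matrix.mulVec_add, hPa, hQa, hPb, hQb]
    ext i j
    have := congrFun (hvec (Pi.single j 1)) i
    simpa [Matrix.mulVec_single] using this
  calc X = D * A * X := hDAX.symm
    _ = D * (A * X) := by rw [Matrix.mul_assoc]
    _ = D * (A * Y) := by rw [hPQ]
    _ = D * A * Y := by rw [Matrix.mul_assoc]
    _ = Y := hDAY
end

section
/- Let A ∈ ℂ^{n×n} with index k and Drazin inverse A^D. For any integer m ≥ k, A^D A^m (A^m)† = A^k (A^{k+1})†, i.e., the expression A^D A^m (A^m)† is independent of m ≥ k and equals the core-EP inverse of A. -/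
/-!
Both `A ^ m * (A ^ m)†` and `A ^ (k + 1) * (A ^ (k + 1))†` are the orthogonal projector onto the
column space of `A ^ m`, which for `m ≥ k` does not depend on `m`: the Drazin equation
`A ^ (k + 1) * A^D = A ^ k` lets `A^D` move between powers of `A` at and above the index.
Hence `A^D * A ^ m * (A ^ m)† = A^D * A ^ (k + 1) * (A ^ (k + 1))† = A ^ k * (A ^ (k + 1))†`.
-/

open Matrix

theorem IsSelfAdjoint.eq_of_mul_eq_of_mul_eq {R : Type*} [Mul R] [StarMul R] {p q : R}
    (hp : IsSelfAdjoint p) (hq : IsSelfAdjoint q) (hqp : q * p = p) (hpq : p * q = q) :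
    p = q := by
  rw [← hp.star_eq, ← hqp, star_mul, hp.star_eq, hq.star_eq, hpq]

namespace IsMoorePenrose

variable {m n p : ℕ}

theorem isSelfAdjoint_mul {A : Matrix (Fin m) (Fin n) ℂ} {X : Matrix (Fin n) (Fin m) ℂ}
    (hX : IsMoorePenrose A X) : IsSelfAdjoint (A * X) :=
  hX.2.2.1

theorem mul_mul_of_eq_mul {A : Matrix (Fin m) (Fin n) ℂ} {X : Matrix (Fin n) (Fin m) ℂ}
    (hX : IsMoorePenrose A X) {B : Matrix (Fin m) (Fin p) ℂ} {U : Matrix (Fin n) (Fin p) ℂ}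
    (hB : B = A * U) : A * X * B = B := by
  rw [hB, ← Matrix.mul_assoc, hX.1]

theorem mul_eq_mul_of_eq_mul {A : Matrix (Fin m) (Fin n) ℂ} {X : Matrix (Fin n) (Fin m) ℂ}
    {B : Matrix (Fin m) (Fin p) ℂ} {Y : Matrix (Fin p) (Fin m) ℂ}
    (hX : IsMoorePenrose A X) (hY : IsMoorePenrose B Y)
    {U : Matrix (Fin p) (Fin n) ℂ} (hA : A = B * U) {V : Matrix (Fin n) (Fin p) ℂ}
    (hB : B = A * V) : A * X = B * Y :=
  hX.isSelfAdjoint_mul.eq_of_mul_eq_of_mul_eq hY.isSelfAdjoint_mul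
    (by rw [← Matrix.mul_assoc, hY.mul_mul_of_eq_mul hA])
    (by rw [← Matrix.mul_assoc, hX.mul_mul_of_eq_mul hB])

end IsMoorePenrose

section DrazinEquation

variable {M : Type*} [Monoid M] {a d : M} {k : ℕ}

theorem pow_add_mul_pow_eq_pow (h : a ^ (k + 1) * d = a ^ k) (t : ℕ) :
    a ^ (k + t) * d ^ t = a ^ k := by
  induction t with
  | zero => simp
  | succ t ih =>
    calc a ^ (k + (t + 1)) * d ^ (t + 1) = a ^ t * (a ^ (k + 1) * d) * d ^ t := by
          rw [pow_succ' d, show k + (t + 1) = t + (k + 1) by omega, pow_add]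
          simp only [mul_assoc]
      _ = a ^ k := by rw [h, ← pow_add, add_comm t, ih]

theorem pow_add_eq_pow_succ_mul (h : a ^ (k + 1) * d = a ^ k) (t : ℕ) :
    a ^ (k + t) = a ^ (k + 1) * (d * a ^ t) := by
  rw [← mul_assoc, h, pow_add]

theorem pow_succ_eq_pow_add_mul (h : a ^ (k + 1) * d = a ^ k) (t : ℕ) :
    a ^ (k + 1) = a ^ (k + t) * (a * d ^ t) := by
  rw [← mul_assoc, ← pow_succ, pow_succ' a (k + t), mul_assoc, pow_add_mul_pow_eq_pow h, ← pow_succ']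

theorem mul_pow_succ_eq_pow (h : a ^ (k + 1) * d = a ^ k) (hc : Commute a d) :
    d * a ^ (k + 1) = a ^ k := by
  rw [← (hc.pow_left (k + 1)).eq, h]

end DrazinEquation

theorem stmt_9_general {n : ℕ} (A : Matrix (Fin n) (Fin n) ℂ) (k : ℕ)
    (D : Matrix (Fin n) (Fin n) ℂ) (hD : IsDrazin A D k)
    (m : ℕ) (hm : k ≤ m)
    (P : Matrix (Fin n) (Fin n) ℂ) (hP : IsMoorePenrose (A ^ m) P)
    (Q : Matrix (Fin n) (Fin n) ℂ) (hQ : IsMoorePenrose (A ^ (k + 1)) Q) :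
    D * A ^ m * P = A ^ k * Q := by
  obtain ⟨hpow, -, hcomm⟩ := hD
  obtain ⟨t, rfl⟩ := Nat.exists_eq_add_of_le hm
  have hproj : A ^ (k + t) * P = A ^ (k + 1) * Q :=
    hP.mul_eq_mul_of_eq_mul hQ (pow_add_eq_pow_succ_mul hpow t) (pow_succ_eq_pow_add_mul hpow t)
  rw [Matrix.mul_assoc, hproj, ← Matrix.mul_assoc, mul_pow_succ_eq_pow hpow hcomm]

theorem stmt_9 {n : ℕ} (A : Matrix (Fin n) (Fin n) ℂ) (k : ℕ)
    (hk : (A ^ k).rank = (A ^ (k + 1)).rank)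
    (hmin : ∀ j : ℕ, (A ^ j).rank = (A ^ (j + 1)).rank → k ≤ j)
    (D : Matrix (Fin n) (Fin n) ℂ) (hD : IsDrazin A D k)
    (m : ℕ) (hm : k ≤ m)
    (P : Matrix (Fin n) (Fin n) ℂ) (hP : IsMoorePenrose (A ^ m) P)
    (Q : Matrix (Fin n) (Fin n) ℂ) (hQ : IsMoorePenrose (A ^ (k + 1)) Q) :
    D * A ^ m * P = A ^ k * Q :=
  stmt_9_general A k D hD m hm P hP Q hQ
end

section
/- Let A ∈ ℂ^{n×n} with rank(A²) = rank(A) and full-rank decomposition A = BG. Then X = B(GB)⁻¹(B*B)⁻¹B* satisfies XAX = X, AXA = A, (AX)* = AX, and range(X) = range(A). -/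
/-!
Since `rank (A²) = rank (B (GB) G) ≤ rank (GB) ≤ r = rank A`, index one forces the `r × r` matrix
`GB` to be invertible, and `B*B` is invertible because `rank (B*B) = rank B = r`. The four
properties are then matrix identities: `XA = B (GB)⁻¹ G` and `AX = B (B*B)⁻¹ B*`, the latter being
Hermitian, and `X = A (X X)`, `A = X (A A)` give the equality of ranges.
-/

open Matrix

namespace Matrix

theorem isUnit_det_of_rank_eq_card {K m : Type*} [Field K] [Fintype m] [DecidableEq m]
    {M : Matrix m m K} (h : M.rank = Fintype.card m) : IsUnit M.det := by
  rw [← isUnit_iff_isUnit_det, ← mulVec_surjective_iff_isUnit, ← coe_mulVecLin,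
    ← LinearMap.range_eq_top]
  exact Submodule.eq_top_of_finrank_eq (h.trans (Module.finrank_fintype_fun_eq_card K).symm)

theorem isUnit_det_mul_of_rank_mul_self_eq {K m k : Type*} [Field K] [Fintype m] [Fintype k]
    [DecidableEq k] {B : Matrix m k K} {G : Matrix k m K}
    (h : (B * G * (B * G)).rank = Fintype.card k) : IsUnit (G * B).det := by
  have hle : (B * G * (B * G)).rank ≤ (G * B).rank := by
    rw [show B * G * (B * G) = B * ((G * B) * G) by simp only [Matrix.mul_assoc]]
    exact (rank_mul_le_right _ _).trans (rank_mul_le_left _ _)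
  exact isUnit_det_of_rank_eq_card (le_antisymm (rank_le_card_width _) (h ▸ hle))

theorem range_mulVecLin_mul_le {R m n o : Type*} [CommRing R] [Fintype n] [Fintype o]
    (A : Matrix m n R) (Y : Matrix n o R) :
    LinearMap.range (A * Y).mulVecLin ≤ LinearMap.range A.mulVecLin := by
  rw [mulVecLin_mul]
  exact LinearMap.range_comp_le_range _ _

section FullRankFactorization

variable {R m k : Type*} [CommRing R] [Fintype m] [Fintype k] [DecidableEq k]
  {B : Matrix m k R} {G C : Matrix k m R}

theorem mul_mul_inv_mul_inv_mul (hGB : IsUnit (G * B).det) :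
    B * G * (B * (G * B)⁻¹ * (C * B)⁻¹ * C) = B * (C * B)⁻¹ * C := by
  calc B * G * (B * (G * B)⁻¹ * (C * B)⁻¹ * C)
      = B * ((G * B) * (G * B)⁻¹) * ((C * B)⁻¹ * C) := by simp only [Matrix.mul_assoc]
    _ = B * (C * B)⁻¹ * C := by rw [mul_nonsing_inv _ hGB, Matrix.mul_one, Matrix.mul_assoc]

theorem mul_inv_mul_inv_mul_mul (hCB : IsUnit (C * B).det) :
    B * (G * B)⁻¹ * (C * B)⁻¹ * C * (B * G) = B * (G * B)⁻¹ * G := by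
  calc B * (G * B)⁻¹ * (C * B)⁻¹ * C * (B * G)
      = B * (G * B)⁻¹ * ((C * B)⁻¹ * (C * B)) * G := by simp only [Matrix.mul_assoc]
    _ = B * (G * B)⁻¹ * G := by rw [nonsing_inv_mul _ hCB, Matrix.mul_one]

theorem mul_inv_mul_inv_mul_mul_mul_self (hGB : IsUnit (G * B).det) (hCB : IsUnit (C * B).det) :
    B * (G * B)⁻¹ * (C * B)⁻¹ * C * (B * G) * (B * (G * B)⁻¹ * (C * B)⁻¹ * C)
      = B * (G * B)⁻¹ * (C * B)⁻¹ * C := by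
  rw [mul_inv_mul_inv_mul_mul hCB]
  calc B * (G * B)⁻¹ * G * (B * (G * B)⁻¹ * (C * B)⁻¹ * C)
      = B * ((G * B)⁻¹ * (G * B)) * (G * B)⁻¹ * (C * B)⁻¹ * C := by simp only [Matrix.mul_assoc]
    _ = B * (G * B)⁻¹ * (C * B)⁻¹ * C := by rw [nonsing_inv_mul _ hGB, Matrix.mul_one]

theorem mul_mul_mul_inv_mul_inv_mul_mul (hGB : IsUnit (G * B).det) (hCB : IsUnit (C * B).det) :
    B * G * (B * (G * B)⁻¹ * (C * B)⁻¹ * C) * (B * G) = B * G := by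
  calc B * G * (B * (G * B)⁻¹ * (C * B)⁻¹ * C) * (B * G)
      = B * (C * B)⁻¹ * C * (B * G) := by rw [mul_mul_inv_mul_inv_mul hGB]
    _ = B * ((C * B)⁻¹ * (C * B)) * G := by simp only [Matrix.mul_assoc]
    _ = B * G := by rw [nonsing_inv_mul _ hCB, Matrix.mul_one]

theorem range_mul_inv_mul_inv_mul (hGB : IsUnit (G * B).det) (hCB : IsUnit (C * B).det) :
    LinearMap.range (B * (G * B)⁻¹ * (C * B)⁻¹ * C).mulVecLin
      = LinearMap.range (B * G).mulVecLin := by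
  set X := B * (G * B)⁻¹ * (C * B)⁻¹ * C
  have hX : B * G * (X * X) = X := by
    rw [← Matrix.mul_assoc, mul_mul_inv_mul_inv_mul hGB]
    calc B * (C * B)⁻¹ * C * X
        = B * ((C * B)⁻¹ * (C * B)) * (G * B)⁻¹ * (C * B)⁻¹ * C := by
          simp only [X, Matrix.mul_assoc]
      _ = X := by rw [nonsing_inv_mul _ hCB, Matrix.mul_one]
  have hBG : X * (B * G * (B * G)) = B * G := by
    rw [← Matrix.mul_assoc, mul_inv_mul_inv_mul_mul hCB]
    calc B * (G * B)⁻¹ * G * (B * G)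
        = B * ((G * B)⁻¹ * (G * B)) * G := by simp only [Matrix.mul_assoc]
      _ = B * G := by rw [nonsing_inv_mul _ hGB, Matrix.mul_one]
  refine le_antisymm ?_ ?_
  · exact hX ▸ range_mulVecLin_mul_le _ _
  · exact hBG ▸ range_mulVecLin_mul_le _ _

end FullRankFactorization

theorem isHermitian_mul_inv_conjTranspose_mul_self_mul_conjTranspose {R m k : Type*} [CommRing R]
    [StarRing R] [Fintype m] [Fintype k] [DecidableEq k] (B : Matrix m k R) :
    (B * (Bᴴ * B)⁻¹ * Bᴴ).IsHermitian := by
  simp only [IsHermitian, conjTranspose_mul, conjTranspose_conjTranspose, conjTranspose_nonsing_inv,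
    Matrix.mul_assoc]

end Matrix

theorem stmt_11_general {n r : ℕ} (A : Matrix (Fin n) (Fin n) ℂ)
    (hind : (A * A).rank = A.rank)
    (B : Matrix (Fin n) (Fin r) ℂ) (G : Matrix (Fin r) (Fin n) ℂ)
    (hr : r = A.rank) (hB : B.rank = r) (hA : A = B * G) :
    (B * (G * B)⁻¹ * (Bᴴ * B)⁻¹ * Bᴴ) * A * (B * (G * B)⁻¹ * (Bᴴ * B)⁻¹ * Bᴴ)
        = B * (G * B)⁻¹ * (Bᴴ * B)⁻¹ * Bᴴ ∧
      A * (B * (G * B)⁻¹ * (Bᴴ * B)⁻¹ * Bᴴ) * A = A ∧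
      (A * (B * (G * B)⁻¹ * (Bᴴ * B)⁻¹ * Bᴴ))ᴴ = A * (B * (G * B)⁻¹ * (Bᴴ * B)⁻¹ * Bᴴ) ∧
      LinearMap.range (B * (G * B)⁻¹ * (Bᴴ * B)⁻¹ * Bᴴ).mulVecLin
        = LinearMap.range A.mulVecLin := by
  have hCB : IsUnit (Bᴴ * B).det := isUnit_det_of_rank_eq_card <| by
    open scoped ComplexOrder in rw [rank_conjTranspose_mul_self, hB, Fintype.card_fin]
  have hGB : IsUnit (G * B).det :=
    isUnit_det_mul_of_rank_mul_self_eq (by rw [← hA, hind, Fintype.card_fin, hr])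
  subst hA
  refine ⟨mul_inv_mul_inv_mul_mul_mul_self hGB hCB, mul_mul_mul_inv_mul_inv_mul_mul hGB hCB,
    ?_, range_mul_inv_mul_inv_mul hGB hCB⟩
  rw [mul_mul_inv_mul_inv_mul hGB]
  exact isHermitian_mul_inv_conjTranspose_mul_self_mul_conjTranspose B

theorem stmt_11 {n r : ℕ} (A : Matrix (Fin n) (Fin n) ℂ)
    (hind : (A * A).rank = A.rank)
    (B : Matrix (Fin n) (Fin r) ℂ) (G : Matrix (Fin r) (Fin n) ℂ)
    (hr : r = A.rank) (hB : B.rank = r) (hG : G.rank = r) (hA : A = B * G) :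
    (B * (G * B)⁻¹ * (Bᴴ * B)⁻¹ * Bᴴ) * A * (B * (G * B)⁻¹ * (Bᴴ * B)⁻¹ * Bᴴ)
        = B * (G * B)⁻¹ * (Bᴴ * B)⁻¹ * Bᴴ ∧
      A * (B * (G * B)⁻¹ * (Bᴴ * B)⁻¹ * Bᴴ) * A = A ∧
      (A * (B * (G * B)⁻¹ * (Bᴴ * B)⁻¹ * Bᴴ))ᴴ = A * (B * (G * B)⁻¹ * (Bᴴ * B)⁻¹ * Bᴴ) ∧
      LinearMap.range (B * (G * B)⁻¹ * (Bᴴ * B)⁻¹ * Bᴴ).mulVecLin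
        = LinearMap.range A.mulVecLin :=
  stmt_11_general A hind B G hr hB hA
end

section
/- Let A ∈ ℂ^{n×n} with index 1. Then the core inverse of A is given by the limit A^⊕ = lim_{λ→0⁺} A A* (A² A* + λI)⁻¹, where the limit is over real λ > 0. -/
/-!
Let `P = A X` and `M = A² Aᴴ`. The defining properties of the core inverse make `P` the
orthogonal projector onto the range of `A`, so `P M = M P = M` and `A Aᴴ P = A Aᴴ`, while
`X A² = A` gives `X M = A Aᴴ`. Hence `N = M + 1 - P` is invertible with `X = A Aᴴ N⁻¹`.
For `μ ≠ 0`, `M + μ` acts as `N + μ` on the range of `P` and as `μ` on its kernel, so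
`(M + μ)⁻¹ = P (N + μ)⁻¹ + μ⁻¹ (1 - P)` and `A Aᴴ (M + μ)⁻¹ = A Aᴴ (N + μ)⁻¹`, which tends to
`A Aᴴ N⁻¹ = X` by continuity of inversion at `N`.
-/

open Matrix Filter Topology

/-- `X` is the core inverse of the index-one matrix `A`. -/
def IsCoreInv {n : ℕ} (A X : Matrix (Fin n) (Fin n) ℂ) : Prop :=
  X * A * X = X ∧ LinearMap.range X.mulVecLin = LinearMap.range Xᴴ.mulVecLin ∧
    LinearMap.range X.mulVecLin = LinearMap.range A.mulVecLin

namespace Matrix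

theorem exists_eq_mul_of_range_mulVecLin_le_s14 {R : Type*} [CommSemiring R] {m k l : Type*}
    [Fintype k] [Fintype l] [DecidableEq k] {B : Matrix m k R} {C : Matrix m l R}
    (h : LinearMap.range B.mulVecLin ≤ LinearMap.range C.mulVecLin) :
    ∃ Y : Matrix l k R, B = C * Y := by
  choose w hw using fun j => h (LinearMap.mem_range_self B.mulVecLin (Pi.single j 1))
  refine ⟨(of w)ᵀ, ext fun i j => ?_⟩
  have hwij := congrFun (hw j) i
  rw [mulVecLin_apply, mulVecLin_apply, mulVec_single_one] at hwij
  simpa [mul_apply, mulVec, dotProduct] using hwij.symm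

section Resolvent

variable {K : Type*} [Field K] {m : Type*} [Fintype m] [DecidableEq m]

theorem inv_add_smul_one_eq {P M : Matrix m m K} (hP : IsIdempotentElem P) (hPM : P * M = M)
    (hMP : M * P = M) {μ : K} (hμ : μ ≠ 0) (hN : IsUnit (M + 1 - P + μ • 1).det) :
    (M + μ • 1)⁻¹ = P * (M + 1 - P + μ • 1)⁻¹ + μ⁻¹ • (1 - P) := by
  set N := M + 1 - P + μ • 1
  have hPN : P * N = M + μ • P := by
    simp only [N, Matrix.mul_add, Matrix.mul_sub, hPM, hP.eq, Matrix.mul_one, Matrix.mul_smul]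
    abel
  have hNP : N * P = M + μ • P := by
    simp only [N, Matrix.add_mul, Matrix.sub_mul, hMP, hP.eq, Matrix.one_mul, Matrix.smul_mul]
    abel
  have hMμP : (M + μ • 1) * P = N * P := by
    rw [hNP, Matrix.add_mul, hMP, Matrix.smul_mul, Matrix.one_mul]
  have hMμQ : (M + μ • 1) * (1 - P) = μ • (1 - P) := by
    rw [Matrix.add_mul, Matrix.mul_sub, Matrix.mul_one, hMP, sub_self, zero_add,
      Matrix.smul_mul, Matrix.one_mul]
  apply inv_eq_right_inv
  calc (M + μ • 1) * (P * N⁻¹ + μ⁻¹ • (1 - P))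
      = N * P * N⁻¹ + μ⁻¹ • ((M + μ • 1) * (1 - P)) := by
        rw [Matrix.mul_add, ← Matrix.mul_assoc, hMμP, Matrix.mul_smul]
    _ = P + (1 - P) := by
        rw [hNP, ← hPN, Matrix.mul_assoc, mul_nonsing_inv _ hN, Matrix.mul_one, hMμQ, smul_smul,
          inv_mul_cancel₀ hμ, one_smul]
    _ = 1 := add_sub_cancel _ _

theorem mul_inv_add_smul_one_eq {P M C : Matrix m m K} (hP : IsIdempotentElem P)
    (hPM : P * M = M) (hMP : M * P = M) (hCP : C * P = C) {μ : K} (hμ : μ ≠ 0)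
    (hN : IsUnit (M + 1 - P + μ • 1).det) :
    C * (M + μ • 1)⁻¹ = C * (M + 1 - P + μ • 1)⁻¹ := by
  rw [inv_add_smul_one_eq hP hPM hMP hμ hN, Matrix.mul_add, ← Matrix.mul_assoc, hCP,
    Matrix.mul_smul, Matrix.mul_sub, Matrix.mul_one, hCP, sub_self, smul_zero, add_zero]

end Resolvent

section Continuity

variable {𝕜 : Type*} [NormedField 𝕜] {m : Type*} [DecidableEq m]

theorem tendsto_add_smul_one (N : Matrix m m 𝕜) :
    Tendsto (fun t : 𝕜 => N + t • 1) (𝓝 0) (𝓝 N) := by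
  have h : Continuous fun t : 𝕜 => N + t • (1 : Matrix m m 𝕜) := by fun_prop
  simpa using h.tendsto 0

variable [Fintype m]

theorem tendsto_inv_add_smul_one {N : Matrix m m 𝕜} (hN : N.det ≠ 0) :
    Tendsto (fun t : 𝕜 => (N + t • 1)⁻¹) (𝓝 0) (𝓝 N⁻¹) := by
  refine (continuousAt_matrix_inv N ?_).tendsto.comp (tendsto_add_smul_one N)
  simpa [Ring.inverse_eq_inv'] using continuousAt_inv₀ hN

theorem eventually_det_add_smul_one_ne_zero {N : Matrix m m 𝕜} (hN : N.det ≠ 0) :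
    ∀ᶠ t : 𝕜 in 𝓝 0, (N + t • 1).det ≠ 0 :=
  ((continuous_id.matrix_det.tendsto N).comp (tendsto_add_smul_one N)).eventually_ne hN

end Continuity

end Matrix

namespace IsCoreInv

variable {n : ℕ} {A X : Matrix (Fin n) (Fin n) ℂ}

theorem mul_self_mul_self (hX : IsCoreInv A X) : X * A * A = A := by
  obtain ⟨Y, hY⟩ := exists_eq_mul_of_range_mulVecLin_le_s14 hX.2.2.ge
  calc X * A * A = X * A * X * Y := by rw [Matrix.mul_assoc (X * A), ← hY]
    _ = A := by rw [hX.1, hY]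

theorem conjTranspose_mul_self_mul (hX : IsCoreInv A X) : Aᴴ * A * X = Aᴴ := by
  obtain ⟨Z, hZ⟩ := exists_eq_mul_of_range_mulVecLin_le_s14 (hX.2.2.symm.trans hX.2.1).le
  have hAH : Aᴴ = Zᴴ * X := by rw [hZ, conjTranspose_mul, conjTranspose_conjTranspose]
  rw [hAH, Matrix.mul_assoc, Matrix.mul_assoc, ← Matrix.mul_assoc X, hX.1]

theorem isHermitian_self_mul (hX : IsCoreInv A X) : (A * X).IsHermitian := by
  have h : (A * X)ᴴ * (A * X) = (A * X)ᴴ := by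
    rw [conjTranspose_mul, Matrix.mul_assoc, ← Matrix.mul_assoc Aᴴ,
      hX.conjTranspose_mul_self_mul]
  have hH := isHermitian_conjTranspose_mul_self (A * X)
  rw [h] at hH
  exact isHermitian_conjTranspose_iff.mp hH

theorem self_mul_mul_self (hX : IsCoreInv A X) : A * X * A = A := by
  calc A * X * A = (Aᴴ * A * X)ᴴ := by
        rw [← hX.isHermitian_self_mul.eq]; simp [conjTranspose_mul, Matrix.mul_assoc]
    _ = A := by rw [hX.conjTranspose_mul_self_mul, conjTranspose_conjTranspose]

theorem isIdempotentElem_self_mul (hX : IsCoreInv A X) : IsIdempotentElem (A * X) := by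
  rw [IsIdempotentElem, ← Matrix.mul_assoc, hX.self_mul_mul_self]

theorem self_mul_mul_pow_two_mul (hX : IsCoreInv A X) : A * X * (A ^ 2 * Aᴴ) = A ^ 2 * Aᴴ := by
  rw [pow_two, ← Matrix.mul_assoc, ← Matrix.mul_assoc, hX.self_mul_mul_self]

theorem pow_two_mul_mul_self_mul (hX : IsCoreInv A X) : A ^ 2 * Aᴴ * (A * X) = A ^ 2 * Aᴴ := by
  rw [Matrix.mul_assoc, ← Matrix.mul_assoc Aᴴ, hX.conjTranspose_mul_self_mul]

theorem mul_conjTranspose_mul_self_mul (hX : IsCoreInv A X) : A * Aᴴ * (A * X) = A * Aᴴ := by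
  rw [Matrix.mul_assoc, ← Matrix.mul_assoc Aᴴ, hX.conjTranspose_mul_self_mul]

theorem mul_pow_two_mul (hX : IsCoreInv A X) : X * (A ^ 2 * Aᴴ) = A * Aᴴ := by
  rw [pow_two, ← Matrix.mul_assoc, ← Matrix.mul_assoc, hX.mul_self_mul_self]

open scoped ComplexOrder in
theorem det_pow_two_mul_add_one_sub_ne_zero (hX : IsCoreInv A X) :
    (A ^ 2 * Aᴴ + 1 - A * X).det ≠ 0 := by
  rw [Ne, ← exists_mulVec_eq_zero_iff]
  rintro ⟨v, hv0, hv⟩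
  -- `N v = 0` forces `M v = 0` and `P v = v`; then `Aᴴ v = 0`, so `v = Pᴴ v = Xᴴ Aᴴ v = 0`.
  have hPN : A * X * (A ^ 2 * Aᴴ + 1 - A * X) = A ^ 2 * Aᴴ := by
    rw [Matrix.mul_sub, Matrix.mul_add, Matrix.mul_one, hX.self_mul_mul_pow_two_mul,
      hX.isIdempotentElem_self_mul.eq, add_sub_cancel_right]
  have hMv : (A ^ 2 * Aᴴ) *ᵥ v = 0 := by rw [← hPN, ← mulVec_mulVec, hv, mulVec_zero]
  have hPv : (A * X) *ᵥ v = v := by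
    rw [sub_mulVec, add_mulVec, hMv, one_mulVec, zero_add, sub_eq_zero] at hv
    exact hv.symm
  have hAv : Aᴴ *ᵥ v = 0 := by
    rw [← self_mul_conjTranspose_mulVec_eq_zero, ← hX.mul_pow_two_mul, ← mulVec_mulVec, hMv,
      mulVec_zero]
  apply hv0
  rw [← hPv, ← hX.isHermitian_self_mul.eq, conjTranspose_mul, ← mulVec_mulVec, hAv,
    mulVec_zero]

theorem mul_conjTranspose_mul_inv (hX : IsCoreInv A X) :
    A * Aᴴ * (A ^ 2 * Aᴴ + 1 - A * X)⁻¹ = X := by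
  have hXN : X * (A ^ 2 * Aᴴ + 1 - A * X) = A * Aᴴ := by
    rw [Matrix.mul_sub, Matrix.mul_add, Matrix.mul_one, hX.mul_pow_two_mul, ← Matrix.mul_assoc,
      hX.1, add_sub_cancel_right]
  rw [← hXN, Matrix.mul_nonsing_inv_cancel_right _ _
    (isUnit_iff_ne_zero.mpr hX.det_pow_two_mul_add_one_sub_ne_zero)]

end IsCoreInv

theorem stmt_14_general {n : ℕ} (A : Matrix (Fin n) (Fin n) ℂ)
    (X : Matrix (Fin n) (Fin n) ℂ) (hX : IsCoreInv A X) :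
    Tendsto (fun lam : ℝ =>
        A * Aᴴ * (A ^ 2 * Aᴴ + (lam : ℂ) • (1 : Matrix (Fin n) (Fin n) ℂ))⁻¹)
      (𝓝[>] (0 : ℝ)) (𝓝 X) := by
  have hN := hX.det_pow_two_mul_add_one_sub_ne_zero
  have hofReal : Tendsto (fun lam : ℝ => (lam : ℂ)) (𝓝 0) (𝓝 0) :=
    Complex.continuous_ofReal.tendsto' 0 0 Complex.ofReal_zero
  have hlim : Tendsto (fun lam : ℝ => A * Aᴴ * (A ^ 2 * Aᴴ + 1 - A * X + (lam : ℂ) • 1)⁻¹)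
      (𝓝 0) (𝓝 X) := by
    have h := (tendsto_const_nhds (x := A * Aᴴ)).mul
      ((tendsto_inv_add_smul_one hN).comp hofReal)
    rwa [hX.mul_conjTranspose_mul_inv] at h
  refine (hlim.mono_left nhdsWithin_le_nhds).congr' ?_
  filter_upwards [(hofReal.eventually (eventually_det_add_smul_one_ne_zero hN)).filter_mono
    nhdsWithin_le_nhds, self_mem_nhdsWithin] with lam hdet hpos
  have hμ : (lam : ℂ) ≠ 0 := Complex.ofReal_ne_zero.mpr (Set.mem_Ioi.mp hpos).ne'
  exact (mul_inv_add_smul_one_eq hX.isIdempotentElem_self_mul hX.self_mul_mul_pow_two_mul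
    hX.pow_two_mul_mul_self_mul hX.mul_conjTranspose_mul_self_mul hμ hdet.isUnit).symm

theorem stmt_14 {n : ℕ} (A : Matrix (Fin n) (Fin n) ℂ)
    (hind : (A * A).rank = A.rank)
    (X : Matrix (Fin n) (Fin n) ℂ) (hX : IsCoreInv A X) :
    Tendsto (fun lam : ℝ =>
        A * Aᴴ * (A ^ 2 * Aᴴ + (lam : ℂ) • (1 : Matrix (Fin n) (Fin n) ℂ))⁻¹)
      (𝓝[>] (0 : ℝ)) (𝓝 X) :=
  stmt_14_general A X hX
end

section
/- Let A ∈ ℂ^{n×n} with index k. Then the core-EP inverse of A is given by A^⊕† = lim_{λ→0⁺} A^k (A^k)* (A^{k+1}(A^k)* + λI)⁻¹, where the limit is over real λ > 0. -/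
open Matrix Filter Topology

open Polynomial

lemma colFac {n : ℕ} (T S : Matrix (Fin n) (Fin n) ℂ)
    (h : LinearMap.range T.mulVecLin ≤ LinearMap.range S.mulVecLin) :
    ∃ B : Matrix (Fin n) (Fin n) ℂ, T = S * B := by
  have hc : ∀ j, ∃ v, S.mulVec v = T.mulVec (Pi.single j 1) := fun j =>
    h ⟨Pi.single j 1, rfl⟩
  choose v hv using hc
  refine ⟨Matrix.of fun i j => v j i, ?_⟩
  ext i j
  have := congrFun (hv j) i
  simp only [Matrix.mulVec, dotProduct] at this
  rw [Matrix.mul_apply]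
  simp only [Matrix.of_apply]
  rw [this]
  simp [Pi.single_apply, mul_ite]

lemma rangeFac {n : ℕ} (A : Matrix (Fin n) (Fin n) ℂ) (k : ℕ)
    (hk : (A ^ k).rank = (A ^ (k + 1)).rank) :
    ∃ B : Matrix (Fin n) (Fin n) ℂ, A ^ k = A ^ (k+1) * B := by
  apply colFac
  have hle : LinearMap.range (A ^ (k+1)).mulVecLin ≤ LinearMap.range (A ^ k).mulVecLin := by
    rw [pow_succ, Matrix.mulVecLin_mul]
    exact LinearMap.range_comp_le_range _ _
  have : LinearMap.range (A ^ (k+1)).mulVecLin = LinearMap.range (A ^ k).mulVecLin :=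
    Submodule.eq_of_le_of_finrank_eq hle hk.symm
  rw [this]

lemma rangeFacL {n : ℕ} (A : Matrix (Fin n) (Fin n) ℂ) (k : ℕ)
    (hk : (A ^ k).rank = (A ^ (k + 1)).rank) :
    ∃ C : Matrix (Fin n) (Fin n) ℂ, A ^ k = C * A ^ (k+1) := by
  open scoped ComplexOrder in
  have hk' : (Aᴴ ^ k).rank = (Aᴴ ^ (k + 1)).rank := by
    rw [← conjTranspose_pow, ← conjTranspose_pow, rank_conjTranspose, rank_conjTranspose, hk]
  obtain ⟨B, hB⟩ := rangeFac Aᴴ k hk'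
  rw [← conjTranspose_pow, ← conjTranspose_pow] at hB
  refine ⟨Bᴴ, ?_⟩
  have := congrArg Matrix.conjTranspose hB
  rwa [conjTranspose_conjTranspose, conjTranspose_mul, conjTranspose_conjTranspose] at this

noncomputable def Ffun {n : ℕ} (M : Matrix (Fin n) (Fin n) ℂ) (z : ℂ) :
    Matrix (Fin n) (Fin n) ℂ :=
  ∑ i ∈ Finset.range (n+1), z ^ i • M ^ (n - i)

lemma Ffun_cont {n : ℕ} (M : Matrix (Fin n) (Fin n) ℂ) : Continuous (Ffun M) := by
  apply continuous_finset_sum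
  intro i _
  exact (continuous_pow i).smul continuous_const

lemma Ffun_zero {n : ℕ} (M : Matrix (Fin n) (Fin n) ℂ) : Ffun M 0 = M ^ n := by
  rw [Ffun, Finset.sum_eq_single 0]
  · simp
  · intro i _ hi; simp [zero_pow hi]
  · simp

lemma Ffun_key {n : ℕ} (M : Matrix (Fin n) (Fin n) ℂ) (z : ℂ) :
    Ffun M z * (z • (1 : Matrix (Fin n) (Fin n) ℂ) - M) = z ^ (n+1) • 1 - M ^ (n+1) := by
  have hcomm : Commute (z • (1 : Matrix (Fin n) (Fin n) ℂ)) M :=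
    (Commute.one_left M).smul_left z
  have h2 := hcomm.geom_sum₂_mul (n+1)
  rw [_root_.smul_pow, one_pow] at h2
  rw [← h2]
  congr 1
  rw [Ffun]
  apply Finset.sum_congr rfl
  intro i hi
  rw [_root_.smul_pow, one_pow, smul_mul_assoc, one_mul]
  norm_num

lemma eval_q {n : ℕ} (M : Matrix (Fin n) (Fin n) ℂ) (z : ℂ) :
    ((-M).charpoly).eval z = (M + z • 1).det := by
  rw [Matrix.charpoly, _root_.eval_det, matPolyEquiv_charmatrix]
  rw [Polynomial.eval_sub, Polynomial.eval_X, Polynomial.eval_C]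
  congr 1
  rw [Matrix.scalar_apply, sub_neg_eq_add, add_comm]
  rw [Matrix.smul_one_eq_diagonal]

lemma mainTendsto {n : ℕ} (M Z : Matrix (Fin n) (Fin n) ℂ) :
    Tendsto (fun lam : ℝ => Z * M ^ (n+1) * (M + (lam : ℂ) • 1)⁻¹)
      (𝓝[>] (0:ℝ)) (𝓝 (Z * M ^ n)) := by
  set q := (-M).charpoly with hqdef
  have hq0 : q ≠ 0 := (charpoly_monic (-M)).ne_zero
  have hqdeg : q.natDegree = n := by
    rw [hqdef, Matrix.charpoly_natDegree_eq_dim, Fintype.card_fin]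
  obtain ⟨u, hqu, hnd⟩ := exists_eq_pow_rootMultiplicity_mul_and_not_dvd q hq0 0
  set m := rootMultiplicity 0 q with hmdef
  rw [map_zero, sub_zero] at hqu hnd
  have hu0 : u.eval 0 ≠ 0 := by
    intro h
    exact hnd (by rw [← sub_zero X, ← map_zero (C : ℂ →+* ℂ[X])]; exact dvd_iff_isRoot.mpr h)
  have hu_ne : u ≠ 0 := fun h => hu0 (by simp [h])
  have hm : m ≤ n := by
    have hdeg2 := natDegree_mul (pow_ne_zero m X_ne_zero) hu_ne
    rw [← hqu, hqdeg, natDegree_X_pow] at hdeg2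
    omega
  have hucont : Tendsto (fun lam : ℝ => u.eval (lam : ℂ)) (𝓝[>] (0:ℝ)) (𝓝 (u.eval 0)) := by
    apply Tendsto.mono_left _ nhdsWithin_le_nhds
    have hc : Continuous fun lam : ℝ => u.eval (lam : ℂ) :=
      u.continuous.comp Complex.continuous_ofReal
    simpa using hc.tendsto 0
  have huev : ∀ᶠ lam : ℝ in 𝓝[>] (0:ℝ), u.eval (lam : ℂ) ≠ 0 := hucont.eventually_ne hu0
  have hpos : ∀ᶠ lam : ℝ in 𝓝[>] (0:ℝ), lam ∈ Set.Ioi (0:ℝ) := eventually_mem_nhdsWithin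
  have hdet : ∀ lam : ℝ, (M + (lam : ℂ) • 1).det = (lam : ℂ) ^ m * u.eval (lam : ℂ) := by
    intro lam
    rw [← eval_q, show (-M).charpoly = X ^ m * u from hqdef ▸ hqu]
    simp [eval_mul, eval_pow]
  have hinv : ∀ᶠ lam : ℝ in 𝓝[>] (0:ℝ), IsUnit (M + (lam : ℂ) • 1).det := by
    filter_upwards [huev, hpos] with lam h1 h2
    rw [hdet]
    exact isUnit_iff_ne_zero.mpr (mul_ne_zero (pow_ne_zero _ (by exact_mod_cast h2.ne')) h1)
  have heq : ∀ᶠ lam : ℝ in 𝓝[>] (0:ℝ),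
      Z * M ^ (n+1) * (M + (lam : ℂ) • 1)⁻¹
        = Z * Ffun M (-(lam : ℂ)) +
          ((-(lam : ℂ)) ^ (n+1) * ((lam : ℂ) ^ m * u.eval (lam : ℂ))⁻¹) •
            (Z * (M + (lam : ℂ) • 1).adjugate) := by
    filter_upwards [hinv] with lam h
    set z : ℂ := -(lam : ℂ) with hz
    set S := M + (lam : ℂ) • 1 with hS
    have hzS : z • (1 : Matrix (Fin n) (Fin n) ℂ) - M = -S := by
      rw [hz, hS]; rw [neg_smul]; abel
    have hKey : M ^ (n+1) = Ffun M z * S + z ^ (n+1) • 1 := by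
      have hF := Ffun_key M z
      rw [hzS, mul_neg, neg_eq_iff_eq_neg, neg_sub] at hF
      rw [hF, sub_add_cancel]
    have hSinv : S⁻¹ = ((lam : ℂ) ^ m * u.eval (lam : ℂ))⁻¹ • S.adjugate := by
      rw [Matrix.inv_def, Ring.inverse_eq_inv', ← hdet lam]
    calc Z * M ^ (n+1) * S⁻¹
        = Z * (Ffun M z * S + z ^ (n+1) • 1) * S⁻¹ := by rw [← hKey]
      _ = Z * Ffun M z * (S * S⁻¹) + z ^ (n+1) • (Z * S⁻¹) := by
          rw [Matrix.mul_add, Matrix.add_mul]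
          rw [mul_smul_comm, smul_mul_assoc, Matrix.mul_one, Matrix.mul_assoc]
          simp only [Matrix.mul_assoc]
      _ = Z * Ffun M z + z ^ (n+1) • (Z * S⁻¹) := by
          rw [Matrix.mul_nonsing_inv S h, Matrix.mul_one]
      _ = Z * Ffun M z + (z ^ (n+1) * ((lam : ℂ) ^ m * u.eval (lam : ℂ))⁻¹) • (Z * S.adjugate) := by
          rw [hSinv, Matrix.mul_smul, smul_smul]
  have hT1 : Tendsto (fun lam : ℝ => Z * Ffun M (-(lam : ℂ))) (𝓝[>] (0:ℝ)) (𝓝 (Z * M ^ n)) := by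
    have hc : Continuous fun lam : ℝ => Z * Ffun M (-(lam : ℂ)) :=
      continuous_const.matrix_mul ((Ffun_cont M).comp Complex.continuous_ofReal.neg)
    apply Tendsto.mono_left _ nhdsWithin_le_nhds
    have := hc.tendsto 0
    simpa [Ffun_zero] using this
  have hT2s : Tendsto (fun lam : ℝ => (-(lam : ℂ)) ^ (n+1) * ((lam : ℂ) ^ m * u.eval (lam : ℂ))⁻¹)
      (𝓝[>] (0:ℝ)) (𝓝 0) := by
    have hev2 : ∀ᶠ lam : ℝ in 𝓝[>] (0:ℝ),
        (-1 : ℂ) ^ (n+1) * ((lam : ℂ) ^ (n+1-m) * (u.eval (lam : ℂ))⁻¹)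
          = (-(lam : ℂ)) ^ (n+1) * ((lam : ℂ) ^ m * u.eval (lam : ℂ))⁻¹ := by
      filter_upwards [hpos] with lam hl
      have hlam : (lam : ℂ) ≠ 0 := by exact_mod_cast hl.ne'
      rw [neg_pow, pow_sub₀ _ hlam (by omega), mul_inv]
      field_simp
      ring
    apply Tendsto.congr' hev2
    have h1 : Tendsto (fun lam : ℝ => (lam : ℂ) ^ (n+1-m)) (𝓝[>] (0:ℝ)) (𝓝 0) := by
      apply Tendsto.mono_left _ nhdsWithin_le_nhds
      have hc : Continuous fun lam : ℝ => (lam : ℂ) ^ (n+1-m) :=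
        Complex.continuous_ofReal.pow _
      have := hc.tendsto 0
      simpa [zero_pow (by omega : n+1-m ≠ 0)] using this
    have h2 : Tendsto (fun lam : ℝ => (u.eval (lam : ℂ))⁻¹) (𝓝[>] (0:ℝ)) (𝓝 (u.eval 0)⁻¹) :=
      hucont.inv₀ hu0
    have := (h1.mul h2).const_mul ((-1 : ℂ) ^ (n+1))
    simpa using this
  have hT2m : Tendsto (fun lam : ℝ => Z * (M + (lam : ℂ) • 1).adjugate) (𝓝[>] (0:ℝ))
      (𝓝 (Z * M.adjugate)) := by
    have hc : Continuous fun lam : ℝ => Z * (M + (lam : ℂ) • 1).adjugate :=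
      continuous_const.matrix_mul
        ((continuous_const.add (Complex.continuous_ofReal.smul continuous_const)).matrix_adjugate)
    apply Tendsto.mono_left _ nhdsWithin_le_nhds
    have := hc.tendsto 0
    simpa using this
  have hT2 := hT2s.smul hT2m
  rw [zero_smul] at hT2
  have hsum := hT1.add hT2
  rw [add_zero] at hsum
  exact Tendsto.congr' (Filter.EventuallyEq.symm heq) hsum

theorem stmt_15 {n : ℕ} (A : Matrix (Fin n) (Fin n) ℂ) (k : ℕ)
    (hk : (A ^ k).rank = (A ^ (k + 1)).rank)
    (hmin : ∀ j : ℕ, (A ^ j).rank = (A ^ (j + 1)).rank → k ≤ j)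
    (P : Matrix (Fin n) (Fin n) ℂ) (hP : IsMoorePenrose (A ^ (k + 1)) P) :
    Tendsto (fun lam : ℝ =>
        A ^ k * (A ^ k)ᴴ *
          (A ^ (k + 1) * (A ^ k)ᴴ + (lam : ℂ) • (1 : Matrix (Fin n) (Fin n) ℂ))⁻¹)
      (𝓝[>] (0 : ℝ)) (𝓝 (A ^ k * P)) := by
  rcases Nat.eq_zero_or_pos n with hn | hn
  · subst hn
    have htriv : ∀ X Y : Matrix (Fin 0) (Fin 0) ℂ, X = Y := fun X Y => by
      ext i j; exact i.elim0
    have hfe : (fun lam : ℝ =>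
        A ^ k * (A ^ k)ᴴ *
          (A ^ (k + 1) * (A ^ k)ᴴ + (lam : ℂ) • (1 : Matrix (Fin 0) (Fin 0) ℂ))⁻¹)
        = fun _ => A ^ k * P := funext fun lam => htriv _ _
    rw [hfe]
    exact tendsto_const_nhds
  obtain ⟨B, hB⟩ := rangeFac A k hk
  obtain ⟨C, hC⟩ := rangeFacL A k hk
  obtain ⟨e1, e2, e3, e4⟩ := hP
  set K := A ^ k with hK
  set M := A ^ (k+1) * Kᴴ with hM
  have ea : A ^ (k+1) * (P * A ^ (k+1)) = A ^ (k+1) := by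
    rw [← Matrix.mul_assoc]; exact e1
  have h2 : K * P * A ^ (k+1) = K := by
    rw [hC]
    simp only [Matrix.mul_assoc]
    rw [ea]
  have h3 : P * M = Kᴴ := by
    calc P * M = P * A ^ (k+1) * Kᴴ := by rw [hM, Matrix.mul_assoc]
      _ = (P * A ^ (k+1))ᴴ * Kᴴ := by rw [e4]
      _ = (K * (P * A ^ (k+1)))ᴴ := (conjTranspose_mul _ _).symm
      _ = Kᴴ := by rw [← Matrix.mul_assoc, h2]
  have h5 : P = P * Pᴴ * Aᴴ * Kᴴ := by
    calc P = P * (A ^ (k+1) * P) := by rw [← Matrix.mul_assoc, e2]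
      _ = P * (A ^ (k+1) * P)ᴴ := by rw [e3]
      _ = P * (Pᴴ * (A ^ (k+1))ᴴ) := by rw [conjTranspose_mul]
      _ = P * Pᴴ * Aᴴ * Kᴴ := by
          rw [pow_succ, conjTranspose_mul, hK]
          simp only [Matrix.mul_assoc]
  have L : ∀ s : ℕ, ∃ D : Matrix (Fin n) (Fin n) ℂ, Kᴴ = D * M ^ (s+1) := by
    intro s
    induction s with
    | zero => exact ⟨P, by rw [pow_one, h3]⟩
    | succ s ih =>
        obtain ⟨D, hD⟩ := ih
        refine ⟨P * Pᴴ * Aᴴ * D, ?_⟩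
        calc Kᴴ = P * M := h3.symm
          _ = (P * Pᴴ * Aᴴ * Kᴴ) * M := by rw [← h5]
          _ = (P * Pᴴ * Aᴴ * (D * M ^ (s+1))) * M := by rw [← hD]
          _ = P * Pᴴ * Aᴴ * D * M ^ (s+1+1) := by
              conv_rhs => rw [pow_succ]
              simp only [Matrix.mul_assoc]
  obtain ⟨D, hD⟩ := L (n - 1)
  rw [show n - 1 + 1 = n by omega] at hD
  set Z := K * P * Pᴴ * Aᴴ * D with hZdef
  have hZ : Z * M ^ n = K * P := by
    calc Z * M ^ n = K * (P * Pᴴ * Aᴴ * (D * M ^ n)) := by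
          rw [hZdef]; simp only [Matrix.mul_assoc]
      _ = K * (P * Pᴴ * Aᴴ * Kᴴ) := by rw [← hD]
      _ = K * P := by rw [← h5]
  have hG : K * Kᴴ = Z * M ^ (n+1) := by
    calc K * Kᴴ = K * (P * M) := by rw [h3]
      _ = (K * P) * M := by rw [Matrix.mul_assoc]
      _ = Z * M ^ n * M := by rw [← hZ]
      _ = Z * M ^ (n+1) := by rw [pow_succ, Matrix.mul_assoc]
  have hmain := mainTendsto M Z
  rw [show Z * M ^ n = K * P from hZ] at hmain
  have hfe : (fun lam : ℝ =>
      A ^ k * (A ^ k)ᴴ *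
        (A ^ (k + 1) * (A ^ k)ᴴ + (lam : ℂ) • (1 : Matrix (Fin n) (Fin n) ℂ))⁻¹)
      = fun lam : ℝ => Z * M ^ (n+1) * (M + (lam : ℂ) • 1)⁻¹ := by
    funext lam
    rw [← hK, ← hM, hG]
  rw [hfe]
  exact hmain
end

section
/- Let A ∈ ℂ^{n×n} with index k. Then the dual core-EP inverse of A is given by A_⊕† = lim_{λ→0⁺} ((A^k)*A^{k+1} + λI)⁻¹ (A^k)* A^k, over real λ > 0. -/
open Matrix Filter Topology Polynomial

set_option linter.unusedVariables false

namespace Stmt17Aux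
open scoped ComplexOrder

variable {n : ℕ}

lemma ext_mulVec {M N : Matrix (Fin n) (Fin n) ℂ} (h : ∀ v, M *ᵥ v = N *ᵥ v) : M = N := by
  ext i j
  simpa using congrFun (h (Pi.single j 1)) i

lemma conj_mulVec_eq_zero {D : Matrix (Fin n) (Fin n) ℂ} {x : Fin n → ℂ}
    (h : Dᴴ *ᵥ (D *ᵥ x) = 0) : D *ᵥ x = 0 := by
  apply dotProduct_star_self_eq_zero.mp
  have h1 : star x ⬝ᵥ (Dᴴ *ᵥ (D *ᵥ x)) = 0 := by rw [h, dotProduct_zero]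
  rw [Matrix.dotProduct_mulVec] at h1
  rwa [Matrix.star_mulVec]

-- algebraic core facts
section Core

variable (C B E P : Matrix (Fin n) (Fin n) ℂ)

theorem main (hBE : B = E * C)
    (hrange : LinearMap.range B.mulVecLin = LinearMap.range C.mulVecLin)
    (hker : LinearMap.ker B.mulVecLin = LinearMap.ker C.mulVecLin)
    (hP1 : B * P * B = B) (hP2 : P * B * P = P) (hP4 : (P * B)ᴴ = P * B) :
    Tendsto (fun lam : ℝ => (Cᴴ * B + (lam : ℂ) • 1)⁻¹ * Cᴴ * C)
      (𝓝[>] (0:ℝ)) (𝓝 (P * C)) := by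
  set M : Matrix (Fin n) (Fin n) ℂ := Cᴴ * B with hM
  set Y : Matrix (Fin n) (Fin n) ℂ := P * C with hY
  -- F3
  have hBPC : B * P * C = C := by
    apply ext_mulVec; intro v
    obtain ⟨u, hu⟩ : C *ᵥ v ∈ LinearMap.range B.mulVecLin := by
      rw [hrange]; exact ⟨v, rfl⟩
    rw [Matrix.mulVecLin_apply] at hu
    calc (B * P * C) *ᵥ v = (B * P) *ᵥ (C *ᵥ v) := by rw [← Matrix.mulVec_mulVec]
      _ = (B * P) *ᵥ (B *ᵥ u) := by rw [hu]
      _ = (B * P * B) *ᵥ u := by rw [Matrix.mulVec_mulVec]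
      _ = B *ᵥ u := by rw [hP1]
      _ = C *ᵥ v := hu
  have hMY : M * Y = Cᴴ * C := by
    calc M * Y = Cᴴ * (B * P * C) := by rw [hM, hY]; noncomm_ring
      _ = Cᴴ * C := by rw [hBPC]
  -- F4 factorization
  have hYfac : Y = Cᴴ * (Eᴴ * Pᴴ * (P * C)) := by
    have h1 : P * B = Bᴴ * Pᴴ := by rw [← hP4, Matrix.conjTranspose_mul]
    have h2 : Bᴴ = Cᴴ * Eᴴ := by rw [hBE, Matrix.conjTranspose_mul]
    calc Y = P * B * P * C := by rw [hY, hP2]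
      _ = Cᴴ * Eᴴ * Pᴴ * (P * C) := by rw [h1, h2]; noncomm_ring
      _ = Cᴴ * (Eᴴ * Pᴴ * (P * C)) := by noncomm_ring
  -- rank facts
  have hrankM : M.rank = Cᴴ.rank := by
    have le1 : M.rank ≤ Cᴴ.rank := Matrix.rank_mul_le_left _ _
    have h1 : (Cᴴ * C).rank = C.rank := Matrix.rank_conjTranspose_mul_self C
    have h2 : (Cᴴ * C).rank ≤ M.rank := by rw [← hMY]; exact Matrix.rank_mul_le_left _ _
    have h3 : Cᴴ.rank = C.rank := Matrix.rank_conjTranspose C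
    omega
  have hrangeM : LinearMap.range M.mulVecLin = LinearMap.range Cᴴ.mulVecLin := by
    apply Submodule.eq_of_le_of_finrank_eq
    · rw [hM, Matrix.mulVecLin_mul]; exact LinearMap.range_comp_le_range _ _
    · exact hrankM
  have hYmem : ∀ v, Y *ᵥ v ∈ LinearMap.range M.mulVecLin := by
    intro v
    rw [hrangeM, hYfac]
    exact ⟨(Eᴴ * Pᴴ * (P * C)) *ᵥ v, by
      rw [Matrix.mulVecLin_apply, Matrix.mulVec_mulVec]⟩
  -- F5
  have hdisj : ∀ v, v ∈ LinearMap.range M.mulVecLin → M *ᵥ v = 0 → v = 0 := by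
    intro v hv hMv
    rw [hrangeM] at hv
    obtain ⟨u, hu⟩ := hv
    rw [Matrix.mulVecLin_apply] at hu
    obtain ⟨z, hz⟩ : B *ᵥ v ∈ LinearMap.range C.mulVecLin := by
      rw [← hrange]; exact ⟨v, rfl⟩
    rw [Matrix.mulVecLin_apply] at hz
    have h1 : Cᴴ *ᵥ (B *ᵥ v) = 0 := by rw [Matrix.mulVec_mulVec]; exact hMv
    have h2 : C *ᵥ z = 0 := conj_mulVec_eq_zero (by rw [hz]; exact h1)
    have h3 : B *ᵥ v = 0 := by rw [← hz, h2]
    have h4 : C *ᵥ v = 0 := by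
      have hv' : v ∈ LinearMap.ker B.mulVecLin := by
        rw [LinearMap.mem_ker, Matrix.mulVecLin_apply]; exact h3
      rw [hker, LinearMap.mem_ker, Matrix.mulVecLin_apply] at hv'
      exact hv'
    have h5 : Cᴴ *ᵥ u = 0 := by
      apply conj_mulVec_eq_zero (D := Cᴴ)
      rw [Matrix.conjTranspose_conjTranspose, hu]
      exact h4
    rw [← hu, h5]
  -- polynomial machinery
  have hcommP : ∀ r : ℂ[X], (Polynomial.aeval M r) * M = M * (Polynomial.aeval M r) := by
    intro r
    have hX : Polynomial.aeval M (Polynomial.X) = M := Polynomial.aeval_X (R := ℂ) M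
    calc (Polynomial.aeval M r) * M = Polynomial.aeval M (r * Polynomial.X) := by
          rw [_root_.map_mul, hX]
      _ = Polynomial.aeval M (Polynomial.X * r) := by rw [mul_comm]
      _ = M * (Polynomial.aeval M r) := by rw [_root_.map_mul, hX]
  have hmem2 : ∀ (r : ℂ[X]) (v), ((Polynomial.aeval M r) * Y) *ᵥ v ∈
      LinearMap.range M.mulVecLin := by
    intro r v
    obtain ⟨u, hu⟩ := hYmem v
    rw [Matrix.mulVecLin_apply] at hu
    refine ⟨(Polynomial.aeval M r) *ᵥ u, ?_⟩
    rw [Matrix.mulVecLin_apply, Matrix.mulVec_mulVec, ← hcommP, ← Matrix.mulVec_mulVec, hu,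
      Matrix.mulVec_mulVec]
  have key : ∀ (N : ℕ) (p : ℂ[X]), p.natDegree ≤ N → p ≠ 0 → (Polynomial.aeval M p) * Y = 0 →
      ∃ q : ℂ[X], q.coeff 0 ≠ 0 ∧ (Polynomial.aeval M q) * Y = 0 := by
    intro N
    induction N with
    | zero =>
      intro p hd hp h
      refine ⟨p, fun h0 => hp ?_, h⟩
      have h1 := Polynomial.eq_C_of_natDegree_le_zero hd
      rw [h1, h0, map_zero]
    | succ N ih =>
      intro p hd hp h
      by_cases h0 : p.coeff 0 = 0
      · have hdiv : p = Polynomial.X * p.divX := by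
          conv_lhs => rw [← Polynomial.X_mul_divX_add p]
          rw [h0, map_zero, add_zero]
        have hne : p.divX ≠ 0 := fun hz => hp (by rw [hdiv, hz, mul_zero])
        have h2 : M * ((Polynomial.aeval M p.divX) * Y) = 0 := by
          rw [← Matrix.mul_assoc,
            show M * (Polynomial.aeval M p.divX) = Polynomial.aeval M p from by
              conv_rhs => rw [hdiv]
              rw [_root_.map_mul, Polynomial.aeval_X]]
          exact h
        have h3 : (Polynomial.aeval M p.divX) * Y = 0 := by
          apply ext_mulVec
          intro v
          rw [Matrix.zero_mulVec]
          apply hdisj _ (hmem2 _ v)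
          rw [Matrix.mulVec_mulVec, h2, Matrix.zero_mulVec]
        apply ih p.divX ?_ hne h3
        have h4 : p.divX.natDegree = p.natDegree - 1 :=
          Polynomial.natDegree_divX_eq_natDegree_tsub_one
        omega
      · exact ⟨p, h0, h⟩
  obtain ⟨q, hq0, hqY⟩ := key M.charpoly.natDegree M.charpoly le_rfl (M.charpoly_monic).ne_zero
    (by rw [Matrix.aeval_self_charpoly, Matrix.zero_mul])
  set c : ℂ := q.coeff 0 with hc
  set G : Matrix (Fin n) (Fin n) ℂ := (-(c⁻¹)) • (Polynomial.aeval M q.divX) with hG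
  have hGcomm : M * G = G * M := by
    rw [hG, Matrix.mul_smul, Matrix.smul_mul, hcommP]
  have hMGY : M * G * Y = Y := by
    have h1 : Polynomial.aeval M q = M * Polynomial.aeval M q.divX + c • 1 := by
      conv_lhs => rw [← Polynomial.X_mul_divX_add q]
      rw [_root_.map_add, _root_.map_mul, Polynomial.aeval_X, Polynomial.aeval_C,
        Algebra.algebraMap_eq_smul_one]
    have h2 : M * (Polynomial.aeval M q.divX) * Y + c • Y = 0 := by
      have h2' := hqY
      rw [h1, Matrix.add_mul, Matrix.smul_mul, Matrix.one_mul] at h2'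
      exact h2'
    have h3 : M * (Polynomial.aeval M q.divX) * Y = -(c • Y) := eq_neg_of_add_eq_zero_left h2
    calc M * G * Y = (-(c⁻¹)) • (M * (Polynomial.aeval M q.divX) * Y) := by
          rw [hG, Matrix.mul_smul, Matrix.smul_mul]
      _ = (-(c⁻¹)) • (-(c • Y)) := by rw [h3]
      _ = (c⁻¹ * c) • Y := by rw [neg_smul, smul_neg, neg_neg, smul_smul]
      _ = Y := by rw [inv_mul_cancel₀ hq0, one_smul]
  -- avoidance of finite sets near 0+
  have havoid : ∀ (F : Set ℝ), F.Finite → ∀ᶠ x : ℝ in 𝓝[>] 0, x ∉ F := by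
    intro F hF
    have hcl : IsClosed (F \ {0}) := (hF.subset Set.diff_subset).isClosed
    have h1 : (F \ {0})ᶜ ∈ 𝓝 (0:ℝ) := hcl.isOpen_compl.mem_nhds (by simp)
    have h2 : ∀ᶠ x : ℝ in 𝓝[>] 0, x ∈ (F \ {0})ᶜ :=
      eventually_nhdsWithin_of_eventually_nhds (eventually_iff.mpr h1)
    filter_upwards [h2, self_mem_nhdsWithin] with x hx hx0 hxF
    exact hx ⟨hxF, by simp [ne_of_gt (Set.mem_Ioi.mp hx0)]⟩
  -- eventual invertibility of M + lam • 1
  have hp0eval : ∀ t : ℂ, ((-M).charpoly).eval t = (M + t • 1).det := by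
    intro t
    rw [Matrix.charpoly, _root_.eval_det, Matrix.matPolyEquiv_charmatrix]
    congr 1
    rw [Polynomial.eval_sub, Polynomial.eval_X, Polynomial.eval_C, Matrix.scalar_apply,
      ← Matrix.smul_one_eq_diagonal, sub_neg_eq_add, add_comm]
  have hfin : {x : ℝ | (M + (x:ℂ) • 1).det = 0}.Finite := by
    have h1 : {z : ℂ | ((-M).charpoly).IsRoot z}.Finite :=
      Polynomial.finite_setOf_isRoot ((-M).charpoly_monic).ne_zero
    have h2 := (h1.preimage (f := fun x : ℝ => (x:ℂ)) Complex.ofReal_injective.injOn)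
    apply h2.subset
    intro x hx
    simp only [Set.mem_setOf_eq, Set.mem_preimage, Polynomial.IsRoot] at hx ⊢
    rw [hp0eval]
    exact hx
  have hev1 : ∀ᶠ lam : ℝ in 𝓝[>] 0, IsUnit (M + (lam:ℂ) • 1).det := by
    filter_upwards [havoid _ hfin] with x hx
    rw [isUnit_iff_ne_zero]
    exact hx
  -- eventual invertibility of 1 + lam • G
  have hdetcont : Tendsto (fun x : ℝ => (1 + (x:ℂ) • G).det) (𝓝[>] 0) (𝓝 1) := by
    have hc : Continuous fun x : ℝ => (1 + (x:ℂ) • G).det :=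
      (continuous_const.add (Complex.continuous_ofReal.smul continuous_const)).matrix_det
    have h1 := (hc.tendsto 0).mono_left (nhdsWithin_le_nhds (s := Set.Ioi (0:ℝ)))
    simpa using h1
  have hev2 : ∀ᶠ lam : ℝ in 𝓝[>] 0, IsUnit (1 + (lam:ℂ) • G).det := by
    have h1 : ∀ᶠ lam : ℝ in 𝓝[>] 0, (1 + (lam:ℂ) • G).det ≠ 0 :=
      hdetcont.eventually_ne one_ne_zero
    filter_upwards [h1] with x hx
    exact isUnit_iff_ne_zero.mpr hx
  -- the eventual closed form
  have heq : ∀ᶠ lam : ℝ in 𝓝[>] 0, (Cᴴ * B + (lam:ℂ) • 1)⁻¹ * Cᴴ * C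
      = Y - (lam:ℂ) • ((1 + (lam:ℂ) • G)⁻¹ * (G * Y)) := by
    filter_upwards [hev1, hev2] with lam h1 h2
    set t : ℂ := (lam:ℂ) with ht
    set R : Matrix (Fin n) (Fin n) ℂ := (1 + t • G)⁻¹ with hR
    have hc1 : (M + t • 1) * (1 + t • G) = (1 + t • G) * (M + t • 1) := by
      simp only [Matrix.mul_add, Matrix.add_mul, Matrix.mul_smul, Matrix.smul_mul, hGcomm,
        Matrix.mul_one, Matrix.one_mul, smul_smul, smul_add]
      abel
    have hR1 : (1 + t • G) * R = 1 := Matrix.mul_nonsing_inv _ h2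
    have hR2 : R * (1 + t • G) = 1 := Matrix.nonsing_inv_mul _ h2
    have hGR : (M + t • 1) * R = R * (M + t • 1) := by
      calc (M + t • 1) * R = (R * (1 + t • G)) * ((M + t • 1) * R) := by
            rw [hR2, Matrix.one_mul]
        _ = R * (((1 + t • G) * (M + t • 1)) * R) := by noncomm_ring
        _ = R * (((M + t • 1) * (1 + t • G)) * R) := by rw [← hc1]
        _ = (R * (M + t • 1)) * ((1 + t • G) * R) := by noncomm_ring
        _ = R * (M + t • 1) := by rw [hR1, Matrix.mul_one]
    have hkey : (M + t • 1) * (Y - t • (R * (G * Y))) = Cᴴ * C := by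
      have e1 : (M + t • 1) * (R * (G * Y)) = R * ((M + t • 1) * (G * Y)) := by
        rw [← Matrix.mul_assoc, hGR, Matrix.mul_assoc]
      have e2 : (M + t • 1) * (G * Y) = (1 + t • G) * Y := by
        calc (M + t • 1) * (G * Y) = M * G * Y + t • (G * Y) := by
              simp [Matrix.add_mul, Matrix.smul_mul, Matrix.mul_assoc]
          _ = Y + t • (G * Y) := by rw [hMGY]
          _ = (1 + t • G) * Y := by
              simp [Matrix.add_mul, Matrix.smul_mul]
      rw [Matrix.mul_sub, Matrix.mul_smul, e1, e2, ← Matrix.mul_assoc R, hR2, Matrix.one_mul,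
        Matrix.add_mul, Matrix.smul_mul, Matrix.one_mul, hMY]
      abel
    have hMt : Cᴴ * B + t • 1 = M + t • 1 := by rw [hM]
    rw [hMt, Matrix.mul_assoc]
    calc (M + t • 1)⁻¹ * (Cᴴ * C) = (M + t • 1)⁻¹ * ((M + t • 1) * (Y - t • (R * (G * Y)))) := by
          rw [hkey]
      _ = Y - t • (R * (G * Y)) := by
          rw [← Matrix.mul_assoc, Matrix.nonsing_inv_mul _ h1, Matrix.one_mul]
  -- the limit of the closed form
  have hlim : Tendsto (fun lam : ℝ => Y - (lam:ℂ) • ((1 + (lam:ℂ) • G)⁻¹ * (G * Y)))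
      (𝓝[>] (0:ℝ)) (𝓝 (P * C)) := by
    have h1 : Tendsto (fun lam : ℝ => ((lam:ℂ))) (𝓝[>] (0:ℝ)) (𝓝 0) := by
      have := (Complex.continuous_ofReal.tendsto 0).mono_left
        (nhdsWithin_le_nhds (s := Set.Ioi (0:ℝ)))
      simpa using this
    have hmat : Tendsto (fun lam : ℝ => (1 + (lam:ℂ) • G)⁻¹ * (G * Y)) (𝓝[>] (0:ℝ))
        (𝓝 (G * Y)) := by
      have hY1 : Tendsto (fun lam : ℝ => 1 + (lam:ℂ) • G) (𝓝[>] (0:ℝ))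
          (𝓝 (1 : Matrix (Fin n) (Fin n) ℂ)) := by
        have hc : Continuous fun lam : ℝ => 1 + (lam:ℂ) • G :=
          continuous_const.add (Complex.continuous_ofReal.smul continuous_const)
        have := (hc.tendsto 0).mono_left (nhdsWithin_le_nhds (s := Set.Ioi (0:ℝ)))
        simpa using this
      have hF : ContinuousAt (fun Z : Matrix (Fin n) (Fin n) ℂ => Z⁻¹ * (G * Y))
          (1 : Matrix (Fin n) (Fin n) ℂ) := by
        have hfun : (fun Z : Matrix (Fin n) (Fin n) ℂ => Z⁻¹ * (G * Y))
            = fun Z : Matrix (Fin n) (Fin n) ℂ => (Z.det)⁻¹ • (Z.adjugate * (G * Y)) := by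
          funext Z
          rw [Matrix.inv_def, Ring.inverse_eq_inv', Matrix.smul_mul]
        rw [hfun]
        refine ContinuousAt.smul (f := fun Z : Matrix (Fin n) (Fin n) ℂ => (Z.det)⁻¹)
          (g := fun Z : Matrix (Fin n) (Fin n) ℂ => Z.adjugate * (G * Y)) ?_ ?_
        · exact ((continuous_id.matrix_det).continuousAt).inv₀ (by simp)
        · exact ((continuous_id.matrix_adjugate).mul continuous_const).continuousAt
      have := hF.tendsto.comp hY1
      rw [inv_one, Matrix.one_mul] at this
      exact this
    have h2 : Tendsto (fun lam : ℝ => (lam:ℂ) • ((1 + (lam:ℂ) • G)⁻¹ * (G * Y)))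
        (𝓝[>] (0:ℝ)) (𝓝 0) := by
      have := h1.smul hmat
      simpa using this
    have h3 := (tendsto_const_nhds (x := Y) (f := 𝓝[>] (0:ℝ))).sub h2
    simpa [hY] using h3
  exact hlim.congr' (heq.mono fun x hx => hx.symm)

end Core

end Stmt17Aux

theorem stmt_17 {n : ℕ} (A : Matrix (Fin n) (Fin n) ℂ) (k : ℕ)
    (hk : (A ^ k).rank = (A ^ (k + 1)).rank)
    (hmin : ∀ j : ℕ, (A ^ j).rank = (A ^ (j + 1)).rank → k ≤ j)
    (P : Matrix (Fin n) (Fin n) ℂ) (hP : IsMoorePenrose (A ^ (k + 1)) P) :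
    Tendsto (fun lam : ℝ =>
        ((A ^ k)ᴴ * A ^ (k + 1) + (lam : ℂ) • (1 : Matrix (Fin n) (Fin n) ℂ))⁻¹ *
          (A ^ k)ᴴ * A ^ k)
      (𝓝[>] (0 : ℝ)) (𝓝 (P * A ^ k)) := by
  have hrange : LinearMap.range (A ^ (k+1)).mulVecLin = LinearMap.range (A ^ k).mulVecLin := by
    apply Submodule.eq_of_le_of_finrank_eq
    · rw [pow_succ, Matrix.mulVecLin_mul]
      exact LinearMap.range_comp_le_range _ _
    · simpa [Matrix.rank] using hk.symm
  have hker : LinearMap.ker (A ^ (k+1)).mulVecLin = LinearMap.ker (A ^ k).mulVecLin := by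
    refine (Submodule.eq_of_le_of_finrank_eq ?_ ?_).symm
    · rw [pow_succ', Matrix.mulVecLin_mul]
      exact LinearMap.ker_le_ker_comp _ _
    · have h1 := LinearMap.finrank_range_add_finrank_ker (A ^ k).mulVecLin
      have h2 := LinearMap.finrank_range_add_finrank_ker (A ^ (k+1)).mulVecLin
      have hk' : Module.finrank ℂ (LinearMap.range (A ^ k).mulVecLin)
          = Module.finrank ℂ (LinearMap.range (A ^ (k+1)).mulVecLin) := hk
      omega
  exact Stmt17Aux.main (A ^ k) (A ^ (k+1)) A P (pow_succ' A k) hrange hker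
    hP.1 hP.2.1 hP.2.2.2
end
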